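/- Suppose char F is odd. Then every principal self-dual 2-quasi-cyclic code of length 2n over F is a consta-dihedral code. In particular, every self-dual 2-quasi-cyclic code of the form FH·(1, a) with a ∈ FH (i.e., every self-dual double circulant code) is a consta-dihedral code. -/

import Mathlib

noncomputable section

/-- The cyclic group of order `n`, written multiplicatively. -/
abbrev Zn (n : ℕ) := Multiplicative (ZMod n)

/-- The group algebra `FH` of the cyclic group of order `n` over `F`. -/
abbrev FH (F : Type*) [Field F] (n : ℕ) := MonoidAlgebra F (Zn n)

variable {F : Type*} [Field F] [Fintype F] {n : ℕ} [NeZero n]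

/-- The "bar" map of the group algebra, induced by `x ↦ x⁻¹`. -/
def bar (a : FH F n) : FH F n :=
  MonoidAlgebra.ofCoeff (Finsupp.equivMapDomain (Equiv.inv (Zn n)) a.coeff)

/-- The inner product on `FH`: `⟨a, b⟩ = ∑ a_g * b_g`. -/
def innerFH (a b : FH F n) : F := ∑ g : Zn n, a.coeff g * b.coeff g

/-- The inner product on `FH × FH`. -/
def innerFH2 (a b : FH F n × FH F n) : F := innerFH a.1 b.1 + innerFH a.2 b.2

/-- `Ĉ₁₂ = {(c, c·g) : c ∈ C12}` as an `FH`-submodule of `FH × FH`. -/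
def hatSub (C12 : Ideal (FH F n)) (g : FH F n) : Submodule (FH F n) (FH F n × FH F n) :=
  Submodule.map (LinearMap.prod LinearMap.id (LinearMap.mulRight (FH F n) g)) C12

/-- A 2-quasi-cyclic code (an `FH`-submodule of `FH × FH`) is self-dual if it
equals its orthogonal complement. -/
def IsSelfDual (C : Submodule (FH F n) (FH F n × FH F n)) : Prop :=
  (C : Set (FH F n × FH F n)) = {v | ∀ c ∈ C, innerFH2 v c = 0}

/-- A 2-quasi-cyclic code is a dihedral code iff it is invariant under
`(a, a') ↦ (ā', ā)` (left multiplication by `y` in the dihedral group algebra). -/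
def IsDihedral (C : Submodule (FH F n) (FH F n × FH F n)) : Prop :=
  ∀ p ∈ C, (bar p.2, bar p.1) ∈ C

/-- A 2-quasi-cyclic code is a consta-dihedral code iff it is invariant under
`(a, a') ↦ (−ā', ā)` (left multiplication by `ỹ` in the consta-dihedral algebra). -/
def IsConstaDihedral (C : Submodule (FH F n) (FH F n × FH F n)) : Prop :=
  ∀ p ∈ C, (-(bar p.2), bar p.1) ∈ C

/-!
Pairing with a barred word is reading off a constant coefficient: `⟨ā, b⟩ = (a b)₁`. Hence for
`C = FH·v` the map `(a, a') ↦ (−ā', ā)` sends `r v` to a word whose inner product with `s v` is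
the constant coefficient of `(r v₁)(s v₂) − (r v₂)(s v₁)`, which vanishes because `FH` is
commutative. So `C` is mapped into `C^⊥`, which is `C` when `C` is self-dual.
-/

omit [Fintype F]

omit [NeZero n] in
@[simp]
lemma coeff_bar (u : FH F n) (g : Zn n) : (bar u).coeff g = u.coeff g⁻¹ := by
  simp [bar]

lemma innerFH_bar_left (u w : FH F n) : innerFH (bar u) w = (u * w).coeff 1 := by
  rw [MonoidAlgebra.coeff_mul_apply_left, Finsupp.sum_fintype _ _ (fun _ => zero_mul _), innerFH]
  exact Fintype.sum_equiv (Equiv.inv (Zn n)) _ _ (fun g => by simp)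

lemma innerFH_neg_left (u w : FH F n) : innerFH (-u) w = -innerFH u w := by
  simp only [innerFH, MonoidAlgebra.coeff_neg, Finsupp.neg_apply, neg_mul, Finset.sum_neg_distrib]

lemma innerFH2_neg_bar_snd_bar_fst (p q : FH F n × FH F n) :
    innerFH2 (-(bar p.2), bar p.1) q = (p.1 * q.2).coeff 1 - (p.2 * q.1).coeff 1 := by
  rw [innerFH2, innerFH_neg_left, innerFH_bar_left, innerFH_bar_left]
  ring

lemma innerFH2_neg_bar_snd_bar_fst_eq_zero_of_mem_span_singleton {v p q : FH F n × FH F n}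
    (hp : p ∈ Submodule.span (FH F n) {v}) (hq : q ∈ Submodule.span (FH F n) {v}) :
    innerFH2 (-(bar p.2), bar p.1) q = 0 := by
  obtain ⟨r, rfl⟩ := Submodule.mem_span_singleton.mp hp
  obtain ⟨s, rfl⟩ := Submodule.mem_span_singleton.mp hq
  rw [innerFH2_neg_bar_snd_bar_fst, sub_eq_zero]
  simp only [Prod.smul_fst, Prod.smul_snd, smul_eq_mul]
  rw [mul_mul_mul_comm r, mul_mul_mul_comm r v.2, mul_comm v.2]

lemma IsSelfDual.mem_of_forall_innerFH2_eq_zero {C : Submodule (FH F n) (FH F n × FH F n)}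
    (hC : IsSelfDual C) {p : FH F n × FH F n} (hp : ∀ c ∈ C, innerFH2 p c = 0) : p ∈ C := by
  rw [← SetLike.mem_coe, hC]
  exact hp

lemma IsSelfDual.isConstaDihedral_span_singleton {v : FH F n × FH F n}
    (hC : IsSelfDual (Submodule.span (FH F n) {v})) :
    IsConstaDihedral (Submodule.span (FH F n) {v}) := fun _ hp =>
  hC.mem_of_forall_innerFH2_eq_zero fun _ hq =>
    innerFH2_neg_bar_snd_bar_fst_eq_zero_of_mem_span_singleton hp hq

theorem principal_self_dual_is_consta_dihedral_odd_char_general (F : Type*) [Field F]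
    (n : ℕ) [NeZero n] :
    (∀ C : Submodule (FH F n) (FH F n × FH F n), IsSelfDual C →
      (∃ v : FH F n × FH F n, C = Submodule.span (FH F n) {v}) → IsConstaDihedral C) ∧
    (∀ (a : FH F n) (C : Submodule (FH F n) (FH F n × FH F n)), IsSelfDual C →
      C = Submodule.span (FH F n) {((1 : FH F n), a)} → IsConstaDihedral C) := by
  have principal : ∀ C : Submodule (FH F n) (FH F n × FH F n), IsSelfDual C →
      (∃ v : FH F n × FH F n, C = Submodule.span (FH F n) {v}) → IsConstaDihedral C := by
    rintro C hC ⟨v, rfl⟩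
    exact hC.isConstaDihedral_span_singleton
  exact ⟨principal, fun a C hC hspan => principal C hC ⟨(1, a), hspan⟩⟩

/-- (char F odd.) Every principal self-dual 2-quasi-cyclic code is a consta-dihedral
code; in particular every self-dual double circulant code `FH·(1, a)` is
consta-dihedral. -/
theorem principal_self_dual_is_consta_dihedral_odd_char (F : Type*) [Field F] [Fintype F]
    (n : ℕ) [NeZero n]
    (hn : 1 < n) (hcop : Nat.Coprime n (Fintype.card F))
    (hchar : ringChar F ≠ 2) :
    (∀ C : Submodule (FH F n) (FH F n × FH F n), IsSelfDual C →
      (∃ v : FH F n × FH F n, C = Submodule.span (FH F n) {v}) → IsConstaDihedral C) ∧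
    (∀ (a : FH F n) (C : Submodule (FH F n) (FH F n × FH F n)), IsSelfDual C →
      C = Submodule.span (FH F n) {((1 : FH F n), a)} → IsConstaDihedral C) :=
  principal_self_dual_is_consta_dihedral_odd_char_general F n
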